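/- Let r ≥ 2 be an integer and K a field. If a simplicial complex Δ satisfies Serre's condition (S_r) over K, then Δ is pure, i.e., all facets of Δ have the same cardinality. -/

import Mathlib

/-! Combinatorial core: simplicial complexes, reduced simplicial homology over a
field, links, dimension, f- and h-vectors, and Serre's condition (S_r). -/

namespace SerrePaper

open scoped Classical

/-- `Δ` is a simplicial complex on the vertex set `Fin n`: every singleton is a face
and it is closed under taking subsets. -/
def IsSimplicialComplex {n : ℕ} (Δ : Set (Finset (Fin n))) : Prop :=
  (∀ i : Fin n, {i} ∈ Δ) ∧ ∀ F ∈ Δ, ∀ G, G ⊆ F → G ∈ Δ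

/-- The faces of `Δ` of cardinality `c` (so of dimension `c - 1`), for `c : ℤ`. -/
def cFaces {n : ℕ} (Δ : Set (Finset (Fin n))) (c : ℤ) : Type :=
  {F : Finset (Fin n) // F ∈ Δ ∧ (F.card : ℤ) = c}

/-- The space of (augmented) simplicial `c-1`-chains of `Δ` with coefficients in `K`. -/
abbrev Chains (K : Type) [Field K] {n : ℕ} (Δ : Set (Finset (Fin n))) (c : ℤ) : Type :=
  cFaces Δ c → K

/-- The simplicial boundary map from chains on cardinality-`(c+1)` faces to chains on
cardinality-`c` faces. -/
noncomputable def bd (K : Type) [Field K] {n : ℕ} (Δ : Set (Finset (Fin n))) (c : ℤ) :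
    Chains K Δ (c + 1) →ₗ[K] Chains K Δ c where
  toFun f G := ∑ v : Fin n,
    if h : v ∉ G.1 ∧ insert v G.1 ∈ Δ then
      (-1 : K) ^ (G.1.filter (fun u => u < v)).card *
        f ⟨insert v G.1, h.2, by
          rw [Finset.card_insert_of_notMem h.1]
          have := G.2.2
          push_cast
          omega⟩
    else 0
  map_add' f g := by
    funext G
    simp only [Pi.add_apply]
    rw [← Finset.sum_add_distrib]
    refine Finset.sum_congr rfl fun v _ => ?_
    by_cases h : v ∉ G.1 ∧ insert v G.1 ∈ Δ
    · simp only [dif_pos h, Pi.add_apply]; change _ * (f _ + g _) = _; ring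
    · simp only [dif_neg h, add_zero]
  map_smul' c f := by
    funext G
    simp only [Pi.smul_apply, smul_eq_mul, RingHom.id_apply]
    rw [Finset.mul_sum]
    refine Finset.sum_congr rfl fun v _ => ?_
    by_cases h : v ∉ G.1 ∧ insert v G.1 ∈ Δ
    · simp only [dif_pos h, Pi.smul_apply, smul_eq_mul]; change _ * (c * f _) = _; ring
    · simp only [dif_neg h, mul_zero]

/-- Vanishing of the `i`-th reduced simplicial homology of `Δ` with coefficients
in `K`:  every `i`-cycle is an `(i+1)`-boundary (in the augmented chain complex,
so that `i = -1` is also meaningful). -/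
def ReducedHomologyVanishes (K : Type) [Field K] {n : ℕ} (Δ : Set (Finset (Fin n)))
    (i : ℤ) : Prop :=
  LinearMap.ker (bd K Δ i) ≤ LinearMap.range (bd K Δ (i + 1))

/-- The link of `Δ` with respect to a face `F`. -/
def link {n : ℕ} (Δ : Set (Finset (Fin n))) (F : Finset (Fin n)) : Set (Finset (Fin n)) :=
  {G | Disjoint G F ∧ G ∪ F ∈ Δ}

/-- The dimension of `Δ` (an integer, `-1` if `Δ = {∅}`). -/
noncomputable def dimC {n : ℕ} (Δ : Set (Finset (Fin n))) : ℤ :=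
  sSup ((fun F => (F.card : ℤ) - 1) '' Δ)

/-- Serre's condition `(S_r)` over the field `K`:  for every face `F` of `Δ`
(including the empty face), `H̃ᵢ(lk_Δ F; K) = 0` for all `i < min (r-1) (dim lk_Δ F)`. -/
def SerreCondition (K : Type) [Field K] {n : ℕ} (r : ℕ) (Δ : Set (Finset (Fin n))) : Prop :=
  ∀ F ∈ Δ, ∀ i : ℤ, i < min ((r : ℤ) - 1) (dimC (link Δ F)) →
    ReducedHomologyVanishes K (link Δ F) i

/-- `faceCount Δ c` is the number of faces of `Δ` of cardinality `c`,
i.e. `f_{c-1}(Δ)`. -/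
noncomputable def faceCount {n : ℕ} (Δ : Set (Finset (Fin n))) (c : ℕ) : ℕ :=
  Set.ncard {F | F ∈ Δ ∧ F.card = c}

/-- The `h`-vector of a complex `Δ` with `dim Δ = d - 1`, defined by the relation
`∑_{i=0}^{d} f_{i-1}(Δ) (x-1)^{d-i} = ∑_{i=0}^{d} h_i(Δ) x^{d-i}`; i.e. `h_k` is the
coefficient of `x^{d-k}` on the left-hand side (and `h_k = 0` for `k > d`). -/
noncomputable def hVec {n : ℕ} (Δ : Set (Finset (Fin n))) (d : ℕ) (k : ℕ) : ℤ :=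
  if k ≤ d then
    (∑ i ∈ Finset.range (d + 1),
      (faceCount Δ i : ℤ) • ((Polynomial.X - 1) ^ (d - i) : Polynomial ℤ)).coeff (d - k)
  else 0

/-!
Over any field, `H̃₀(Γ) = 0` forces the 1-skeleton of `Γ` to be connected: if `w` lies outside
the connected component `C` of `u`, the functional summing the coefficients of a 0-chain over
the vertices in `C` kills the boundary of every edge (an edge has both ends in `C` or neither,
and its two ends carry opposite signs), yet takes the value `1` on the cycle `u - w`.
Hence, for `r ≥ 2`, `(S_r)` makes the link of every face `F` with `dim lk F ≥ 1` connected.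

Purity then follows by downward induction on `F`: all facets containing `F` have the same size.
By induction this holds for `F ∪ {v}`, `v` a vertex of `lk F`, and an edge `{b, c}` of `lk F`
lies in a facet containing both `F ∪ {b}` and `F ∪ {c}`, so this common size is constant along
paths in the connected link. If `lk F` has no edge, every facet containing `F` is `F` itself or
has size `|F| + 1`, and the former happens only when `F` is a facet.
-/

open Finset

def oneSkeleton {n : ℕ} (Γ : Set (Finset (Fin n))) : SimpleGraph (Fin n) where
  Adj a b := a ≠ b ∧ ({a, b} : Finset (Fin n)) ∈ Γ
  symm := ⟨fun a b h => ⟨h.1.symm, pair_comm a b ▸ h.2⟩⟩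
  loopless := ⟨fun _ h => h.1 rfl⟩

theorem IsSimplicialComplex.isLowerSet {n : ℕ} {Δ : Set (Finset (Fin n))}
    (hΔ : IsSimplicialComplex Δ) : IsLowerSet Δ :=
  fun A B hBA hA => hΔ.2 A hA B hBA

section Homology

variable {K : Type} [Field K] {n : ℕ} {Γ : Set (Finset (Fin n))}

noncomputable def chainCoeff {c : ℤ} (f : Chains K Γ c) (S : Finset (Fin n)) : K :=
  if h : S ∈ Γ ∧ (S.card : ℤ) = c then f ⟨S, h⟩ else 0

theorem chainCoeff_coe {c : ℤ} (f : Chains K Γ c) (S : cFaces Γ c) :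
    chainCoeff f S.1 = f S :=
  dif_pos S.2

theorem chainCoeff_bd (hΓ : IsLowerSet Γ) {c : ℤ} (f : Chains K Γ (c + 1))
    {S : Finset (Fin n)} (hS : (S.card : ℤ) = c) :
    chainCoeff (bd K Γ c f) S =
      ∑ v with v ∉ S, (-1 : K) ^ #{u ∈ S | u < v} * chainCoeff f (insert v S) := by
  rw [sum_filter]
  by_cases hSΓ : S ∈ Γ
  · rw [chainCoeff, dif_pos ⟨hSΓ, hS⟩]
    simp only [bd, LinearMap.coe_mk, AddHom.coe_mk]
    refine sum_congr rfl fun v _ => ?_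
    by_cases hv : v ∈ S
    · simp [hv]
    by_cases hvS : insert v S ∈ Γ
    · have hcard : ((insert v S).card : ℤ) = c + 1 := by
        rw [card_insert_of_notMem hv]; push_cast; omega
      rw [dif_pos ⟨hv, hvS⟩, if_pos hv, chainCoeff, dif_pos ⟨hvS, hcard⟩]
    · rw [dif_neg fun h => hvS h.2, if_pos hv, chainCoeff, dif_neg fun h => hvS h.1, mul_zero]
  · rw [chainCoeff, dif_neg fun h => hSΓ h.1]
    refine (sum_eq_zero fun v _ => ?_).symm
    have : insert v S ∉ Γ := fun h => hSΓ (hΓ (subset_insert v S) h)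
    simp [chainCoeff, this]

theorem bd_zero_apply (hΓ : IsLowerSet Γ) (f : Chains K Γ (0 + 1)) (G : cFaces Γ 0) :
    bd K Γ 0 f G = ∑ v, chainCoeff f {v} := by
  have hG : G.1 = ∅ := card_eq_zero.mp (by exact_mod_cast G.2.2)
  rw [← chainCoeff_coe (bd K Γ 0 f) G, chainCoeff_bd hΓ f G.2.2, hG]
  simp

theorem neg_one_pow_filter_lt_add_swap {x y : Fin n} (hxy : x ≠ y) :
    (-1 : K) ^ #{t ∈ {x} | t < y} + (-1 : K) ^ #{t ∈ {y} | t < x} = 0 := by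
  rcases hxy.lt_or_gt with h | h
  · simp [filter_singleton, h, h.not_gt]
  · simp [filter_singleton, h, h.not_gt]

theorem sum_chainCoeff_bd_eq_zero (hΓ : IsLowerSet Γ) {C : Finset (Fin n)}
    (hC : ∀ a b, (oneSkeleton Γ).Adj a b → a ∈ C → b ∈ C) (g : Chains K Γ (1 + 1)) :
    ∑ x ∈ C, chainCoeff (bd K Γ 1 g) {x} = 0 := by
  set T : Fin n × Fin n → K := fun p =>
    if p.1 ∈ C ∧ p.2 ≠ p.1 then
      (-1 : K) ^ #{t ∈ {p.1} | t < p.2} * chainCoeff g {p.2, p.1}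
    else 0 with hT
  have hrow : ∀ x ∈ C, chainCoeff (bd K Γ 1 g) {x} = ∑ y, T (x, y) := by
    intro x hx
    rw [chainCoeff_bd hΓ g (by simp), sum_filter]
    refine sum_congr rfl fun y _ => ?_
    simp [hT, hx, eq_comm]
  have hswap : ∀ p, T p + T p.swap = 0 := by
    rintro ⟨x, y⟩
    by_cases hxy : x = y
    · simp [hT, hxy]
    by_cases hedge : ({y, x} : Finset (Fin n)) ∈ Γ
    · have hadj : (oneSkeleton Γ).Adj x y := ⟨hxy, pair_comm y x ▸ hedge⟩
      have hiff : x ∈ C ↔ y ∈ C := ⟨hC x y hadj, hC y x hadj.symm⟩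
      by_cases hxC : x ∈ C
      · simp only [hT, Prod.swap_prod_mk, if_pos (⟨hxC, Ne.symm hxy⟩ : x ∈ C ∧ y ≠ x),
          if_pos (⟨hiff.1 hxC, hxy⟩ : y ∈ C ∧ x ≠ y), pair_comm x y, ← add_mul,
          neg_one_pow_filter_lt_add_swap hxy, zero_mul]
      · simp [hT, hxC, mt hiff.2 hxC]
    · have hedge' : ({x, y} : Finset (Fin n)) ∉ Γ := pair_comm x y ▸ hedge
      simp [hT, chainCoeff, hedge, hedge']
  have hout : ∀ x ∉ C, ∑ y, T (x, y) = 0 := fun x hx =>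
    sum_eq_zero fun y _ => by simp [hT, hx]
  rw [sum_congr rfl hrow, sum_subset (subset_univ C) fun x _ hx => hout x hx,
    ← Fintype.sum_prod_type]
  refine sum_ninvolution Prod.swap hswap (fun p hp => ?_) (fun _ => mem_univ _)
    Prod.swap_swap
  intro hfix
  exact hp (by simp [hT, show p.2 = p.1 from congrArg Prod.fst hfix])

theorem oneSkeleton_reachable_of_reducedHomologyVanishes_zero (hΓ : IsLowerSet Γ)
    (hH : ReducedHomologyVanishes K Γ 0) {u w : Fin n} (hu : {u} ∈ Γ) (hw : {w} ∈ Γ) :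
    (oneSkeleton Γ).Reachable u w := by
  by_contra huw
  let z : Chains K Γ (0 + 1) := fun V =>
    (if V.1 = {u} then 1 else 0) - (if V.1 = {w} then 1 else 0)
  have hz : ∀ x, chainCoeff z {x} = (if x = u then 1 else 0) - (if x = w then 1 else 0) := by
    intro x
    by_cases hx : ({x} : Finset (Fin n)) ∈ Γ
    · simp [chainCoeff, hx, z, eq_comm]
    · have hxu : x ≠ u := by rintro rfl; exact hx hu
      have hxw : x ≠ w := by rintro rfl; exact hx hw
      simp [chainCoeff, hx, hxu, hxw]
  have hcycle : z ∈ LinearMap.ker (bd K Γ 0) := by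
    ext G
    simp [bd_zero_apply hΓ, hz]
  obtain ⟨g, hg⟩ := hH hcycle
  let C : Finset (Fin n) := univ.filter ((oneSkeleton Γ).Reachable u)
  have hC : ∀ a b, (oneSkeleton Γ).Adj a b → a ∈ C → b ∈ C := fun a b hab ha => by
    simp only [C, mem_filter, mem_univ, true_and] at ha ⊢
    exact ha.trans hab.reachable
  have hsum := sum_chainCoeff_bd_eq_zero hΓ hC g
  rw [show bd K Γ 1 g = z from hg] at hsum
  simp [hz, C, sum_sub_distrib, huw] at hsum

end Homology

section Link

variable {n : ℕ} {Δ : Set (Finset (Fin n))}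

theorem isLowerSet_link (hΔ : IsLowerSet Δ) (F : Finset (Fin n)) : IsLowerSet (link Δ F) :=
  fun _ _ hBA hA => ⟨hA.1.mono_left hBA, hΔ (union_subset_union_left hBA) hA.2⟩

theorem sdiff_mem_link {F H : Finset (Fin n)} (hH : H ∈ Δ) (hFH : F ⊆ H) :
    H \ F ∈ link Δ F :=
  ⟨sdiff_disjoint, by rwa [sdiff_union_of_subset hFH]⟩

theorem singleton_mem_link {F : Finset (Fin n)} {v : Fin n} (hv : v ∉ F) (h : insert v F ∈ Δ) :
    {v} ∈ link Δ F :=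
  ⟨disjoint_singleton_left.mpr hv, by rwa [← insert_eq]⟩

theorem le_dimC {Γ : Set (Finset (Fin n))} {S : Finset (Fin n)} (hS : S ∈ Γ) :
    (S.card : ℤ) - 1 ≤ dimC Γ := by
  refine le_csSup ⟨n, ?_⟩ ⟨S, hS, rfl⟩
  rintro _ ⟨T, _, rfl⟩
  have := card_finset_fin_le T
  dsimp only
  omega

end Link

section Purity

variable {n : ℕ} {Δ : Set (Finset (Fin n))}

theorem card_eq_of_reachable_in_link {F : Finset (Fin n)}
    (ih : ∀ y ∉ F, ∀ B B', Maximal (· ∈ Δ) B → Maximal (· ∈ Δ) B' →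
      insert y F ⊆ B → insert y F ⊆ B' → B.card = B'.card)
    {v w : Fin n} (hv : v ∉ F) (hvw : (oneSkeleton (link Δ F)).Reachable v w)
    {B B' : Finset (Fin n)} (hB : Maximal (· ∈ Δ) B) (hB' : Maximal (· ∈ Δ) B')
    (hvB : insert v F ⊆ B) (hwB' : insert w F ⊆ B') : B.card = B'.card := by
  rw [SimpleGraph.reachable_iff_reflTransGen] at hvw
  induction hvw generalizing B' with
  | refl => exact ih v hv B B' hB hB' hvB hwB'
  | @tail b c _ hbc ihb =>
    obtain ⟨D, hbcD, hD⟩ := Finite.exists_le_maximal (p := (· ∈ Δ)) hbc.2.2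
    have hcF : c ∉ F := disjoint_left.mp hbc.2.1 (by simp)
    have hbD : insert b F ⊆ D := insert_subset (hbcD (by simp)) (subset_union_right.trans hbcD)
    have hcD : insert c F ⊆ D := insert_subset (hbcD (by simp)) (subset_union_right.trans hbcD)
    exact (ihb hD hbD).trans (ih c hcF D B' hD hB' hcD hwB')

theorem card_eq_of_maximal_of_link_reachable (hΔ : IsLowerSet Δ)
    (hconn : ∀ F ∈ Δ, (∃ E ∈ link Δ F, 2 ≤ E.card) →
      ∀ u w, {u} ∈ link Δ F → {w} ∈ link Δ F → (oneSkeleton (link Δ F)).Reachable u w)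
    (F : Finset (Fin n)) {G G' : Finset (Fin n)} (hG : Maximal (· ∈ Δ) G)
    (hG' : Maximal (· ∈ Δ) G') (hFG : F ⊆ G) (hFG' : F ⊆ G') : G.card = G'.card := by
  induction F using WellFoundedGT.induction generalizing G G' with
  | _ F ih =>
  have hF : F ∈ Δ := hΔ hFG hG.1
  by_cases hFmax : Maximal (· ∈ Δ) F
  · rw [← hFmax.eq_of_le hG.1 hFG, ← hFmax.eq_of_le hG'.1 hFG']
  have hFG_ss : F ⊂ G := hFG.ssubset_of_ne fun h => hFmax (h ▸ hG)
  have hFG'_ss : F ⊂ G' := hFG'.ssubset_of_ne fun h => hFmax (h ▸ hG')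
  by_cases hedge : ∃ E ∈ link Δ F, 2 ≤ E.card
  · obtain ⟨v, hvG, hvF⟩ := exists_of_ssubset hFG_ss
    obtain ⟨v', hv'G', hv'F⟩ := exists_of_ssubset hFG'_ss
    have hvFG : insert v F ⊆ G := insert_subset hvG hFG
    have hv'FG' : insert v' F ⊆ G' := insert_subset hv'G' hFG'
    have hreach := hconn F hF hedge v v' (singleton_mem_link hvF (hΔ hvFG hG.1))
      (singleton_mem_link hv'F (hΔ hv'FG' hG'.1))
    exact card_eq_of_reachable_in_link (fun y hy _ _ => ih _ (ssubset_insert hy)) hvF hreach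
      hG hG' hvFG hv'FG'
  · have hcard : ∀ B, B ∈ Δ → F ⊂ B → B.card = F.card + 1 := fun B hB hFB => by
      have h1 := card_lt_card hFB
      have h2 : (B \ F).card ≤ 1 := by
        by_contra! h
        exact hedge ⟨B \ F, sdiff_mem_link hB hFB.subset, h⟩
      rw [card_sdiff_of_subset hFB.subset] at h2
      omega
    rw [hcard G hG.1 hFG_ss, hcard G' hG'.1 hFG'_ss]

end Purity

theorem oneSkeleton_link_reachable_of_serreCondition {K : Type} [Field K] {n r : ℕ}
    (hr : 2 ≤ r) {Δ : Set (Finset (Fin n))} (hΔ : IsLowerSet Δ) (hS : SerreCondition K r Δ)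
    {F : Finset (Fin n)} (hF : F ∈ Δ) (hedge : ∃ E ∈ link Δ F, 2 ≤ E.card) {u w : Fin n}
    (hu : {u} ∈ link Δ F) (hw : {w} ∈ link Δ F) :
    (oneSkeleton (link Δ F)).Reachable u w := by
  obtain ⟨E, hE, hE2⟩ := hedge
  have hdim : 1 ≤ dimC (link Δ F) := le_trans (by omega) (le_dimC hE)
  exact oneSkeleton_reachable_of_reducedHomologyVanishes_zero (isLowerSet_link hΔ F)
    (hS F hF 0 (lt_min (by omega) (by omega))) hu hw

/-- **Lemma (purity).**  Let `r ≥ 2` and let `K` be a field.  If a simplicial complex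
`Δ` satisfies Serre's condition `(S_r)` over `K`, then `Δ` is pure: all facets
(maximal faces) of `Δ` have the same cardinality. -/
theorem pure_of_serreCondition {n : ℕ} (K : Type) [Field K] (r : ℕ) (hr : 2 ≤ r)
    (Δ : Set (Finset (Fin n))) (hΔ : IsSimplicialComplex Δ)
    (hS : SerreCondition K r Δ) :
    ∀ F ∈ Δ, (∀ G ∈ Δ, F ⊆ G → G = F) →
      ∀ F' ∈ Δ, (∀ G ∈ Δ, F' ⊆ G → G = F') → F.card = F'.card := by
  intro F hF hFmax F' hF' hF'max
  have hlow := hΔ.isLowerSet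
  exact card_eq_of_maximal_of_link_reachable hlow
    (fun _ hG hedge _ _ => oneSkeleton_link_reachable_of_serreCondition hr hlow hS hG hedge)
    ∅ ⟨hF, fun G hG hFG => (hFmax G hG hFG).le⟩
    ⟨hF', fun G hG hFG => (hF'max G hG hFG).le⟩
    (empty_subset F) (empty_subset F')

end SerrePaper
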